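/- For the one-dimensional Gaussian mechanism: if |a − b| ≤ Δ and σ ≥ Δ·√(2 ln(1.25/β))/ε with 0 < ε ≤ 1 and 0 < β < 1, then for every measurable S ⊆ ℝ, P[a + N(0,σ²) ∈ S] ≤ e^ε · P[b + N(0,σ²) ∈ S] + β. -/

import Mathlib

open MeasureTheory Real ProbabilityTheory

/-!
The log-likelihood ratio of `N(a, σ²)` against `N(b, σ²)` at `y` is `(a - b) (2y - a - b) / (2σ²)`,
so on the set where it is at most `ε` the density of the first law is at most `e^ε` times the
other one. For `b ≤ a` the complement of that set is a right tail beyond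
`a + σ (x - 1 / (2x))`, where `x = √(2 L)` and `L = log (1.25 / β)`; shifting the density gives
`P(Z ≥ t) ≤ e^{-t²/2} / 2` for `t ≥ 0`, which bounds this tail by `1.25 e^{-L} = β`.
The case `a ≤ b` follows by the reflection `y ↦ -y`.
-/

open Set
open scoped NNReal ENNReal

namespace ProbabilityTheory

lemma gaussianPDFReal_eq_exp_mul (a b : ℝ) (v : ℝ≥0) (x : ℝ) :
    gaussianPDFReal a v x =
      rexp ((a - b) * (2 * x - a - b) / (2 * v)) * gaussianPDFReal b v x := by
  simp only [gaussianPDFReal]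
  rw [mul_left_comm, ← exp_add, ← add_div]
  ring_nf

lemma gaussianReal_le_exp_mul_of_forall_le {a b ε : ℝ} {v : ℝ≥0} (hv : v ≠ 0) {A : Set ℝ}
    (hA : ∀ x ∈ A, (a - b) * (2 * x - a - b) / (2 * v) ≤ ε) :
    gaussianReal a v A ≤ ENNReal.ofReal (rexp ε) * gaussianReal b v A := by
  rw [gaussianReal_apply a hv, gaussianReal_apply b hv,
    ← lintegral_const_mul _ (measurable_gaussianPDF b v)]
  refine setLIntegral_mono ((measurable_gaussianPDF b v).const_mul _) fun x hx => ?_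
  rw [gaussianPDF, gaussianPDF, gaussianPDFReal_eq_exp_mul a b,
    ← ENNReal.ofReal_mul (exp_pos ε).le]
  gcongr
  · exact gaussianPDFReal_nonneg b v x
  · exact hA x hx

lemma gaussianReal_Ici_self (m : ℝ) {v : ℝ≥0} (hv : v ≠ 0) :
    gaussianReal m v (Ici m) = 2⁻¹ := by
  have := nullSingletonClass_gaussianReal (μ := m) hv
  have hreflect : gaussianReal m v (Iic m) = gaussianReal m v (Ici m) := by
    have h := gaussianReal_map_const_sub (μ := m) (v := v) (2 * m)
    rw [two_mul, add_sub_cancel_right] at h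
    conv_rhs => rw [← h]
    rw [Measure.map_apply (measurable_const_sub _) measurableSet_Ici]
    congr 1
    ext x
    simp only [mem_Iic, mem_preimage, mem_Ici]
    constructor <;> intro <;> linarith
  have htotal : gaussianReal m v (Iic m) + gaussianReal m v (Ioi m) = 1 := by
    rw [← measure_union (Iic_disjoint_Ioi le_rfl) measurableSet_Ioi, Iic_union_Ioi, measure_univ]
  rw [hreflect, measure_congr Ioi_ae_eq_Ici, ← two_mul] at htotal
  exact ENNReal.eq_inv_of_mul_eq_one_left (by rwa [mul_comm])

lemma gaussianReal_Ici_add_le (m : ℝ) {v : ℝ≥0} (hv : v ≠ 0) {s : ℝ} (hs : 0 ≤ s) :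
    gaussianReal m v (Ici (m + s)) ≤ ENNReal.ofReal (rexp (-s ^ 2 / (2 * v))) * 2⁻¹ := by
  have hshift : gaussianReal m v (Ici (m + s)) = gaussianReal (m - s) v (Ici m) := by
    rw [← gaussianReal_map_sub_const s,
      Measure.map_apply (measurable_sub_const s) measurableSet_Ici]
    congr 1
    ext x
    simp
  rw [hshift, ← gaussianReal_Ici_self m hv]
  refine gaussianReal_le_exp_mul_of_forall_le hv fun x (hx : m ≤ x) => ?_
  gcongr
  nlinarith

lemma gaussianPDFReal_le (m : ℝ) (v : ℝ≥0) (x : ℝ) :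
    gaussianPDFReal m v x ≤ (√(2 * π * v))⁻¹ :=
  mul_le_of_le_one_right (by positivity)
    (exp_le_one_iff.2 (div_nonpos_of_nonpos_of_nonneg (neg_nonpos.2 (sq_nonneg _))
      (by positivity)))

lemma gaussianReal_le_mul_volume (m : ℝ) {v : ℝ≥0} (hv : v ≠ 0) (A : Set ℝ) :
    gaussianReal m v A ≤ ENNReal.ofReal (√(2 * π * v))⁻¹ * volume A := by
  rw [gaussianReal_apply m hv, ← setLIntegral_const]
  exact setLIntegral_mono measurable_const fun x _ =>
    ENNReal.ofReal_le_ofReal (gaussianPDFReal_le m v x)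

lemma gaussianReal_Ioi_sub_le (m : ℝ) {v : ℝ≥0} (hv : v ≠ 0) (s : ℝ) :
    gaussianReal m v (Ioi (m - s)) ≤ ENNReal.ofReal (s / √(2 * π * v)) + 2⁻¹ := by
  calc gaussianReal m v (Ioi (m - s))
      ≤ gaussianReal m v (Ioc (m - s) m) + gaussianReal m v (Ici m) := by
        refine (measure_mono fun x (hx : m - s < x) => ?_).trans (measure_union_le _ _)
        rcases le_total x m with h | h
        · exact Or.inl ⟨hx, h⟩
        · exact Or.inr h
    _ ≤ ENNReal.ofReal (√(2 * π * v))⁻¹ * volume (Ioc (m - s) m) + 2⁻¹ :=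
        add_le_add (gaussianReal_le_mul_volume m hv _) (gaussianReal_Ici_self m hv).le
    _ = ENNReal.ofReal (s / √(2 * π * v)) + 2⁻¹ := by
        rw [Real.volume_Ioc, ← ENNReal.ofReal_mul (by positivity), sub_sub_cancel,
          div_eq_inv_mul]

lemma gaussianReal_neg_apply_neg (m : ℝ) (v : ℝ≥0) (S : Set ℝ) :
    gaussianReal (-m) v (-S) = gaussianReal m v S := by
  rw [← gaussianReal_map_neg]
  exact (MeasurableEquiv.neg ℝ).map_apply (-S) |>.trans (by simp)

lemma gaussianReal_Ioi_add_mul_sqrt_le (m : ℝ) {σ L : ℝ} (hσ : 0 < σ) (hL : 1 / 5 ≤ L) :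
    gaussianReal m (σ ^ 2).toNNReal (Ioi (m + σ * (√(2 * L) - 1 / (2 * √(2 * L)))))
      ≤ ENNReal.ofReal (1.25 * rexp (-L)) := by
  set x := √(2 * L)
  have hx : 0 < x := sqrt_pos.2 (by linarith)
  have hx2 : x ^ 2 = 2 * L := sq_sqrt (by linarith)
  have hv : (σ ^ 2).toNNReal ≠ 0 := by simpa using hσ.ne'
  have hvσ : ((σ ^ 2).toNNReal : ℝ) = σ ^ 2 := Real.coe_toNNReal _ (sq_nonneg σ)
  rcases le_total (1 / (2 * x)) x with hpos | hneg
  · have ht : 2 * L - 1 ≤ (x - 1 / (2 * x)) ^ 2 := by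
      have : (x - 1 / (2 * x)) ^ 2 = x ^ 2 - 1 + 1 / (4 * x ^ 2) := by field_simp; ring
      rw [this, hx2]
      linarith [show 0 < 1 / (4 * (2 * L)) by positivity]
    have hexp_half : rexp (1 / 2) ≤ 2.5 := by
      have := exp_bound_div_one_sub_of_interval (x := 1 / 2) (by norm_num) (by norm_num)
      linarith
    set t := x - 1 / (2 * x)
    calc gaussianReal m (σ ^ 2).toNNReal (Ioi (m + σ * t))
        ≤ gaussianReal m (σ ^ 2).toNNReal (Ici (m + σ * t)) := measure_mono Ioi_subset_Ici_self
      _ ≤ ENNReal.ofReal (rexp (-(σ * t) ^ 2 / (2 * (σ ^ 2).toNNReal))) * 2⁻¹ :=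
          gaussianReal_Ici_add_le m hv (mul_nonneg hσ.le (sub_nonneg.2 hpos))
      _ = ENNReal.ofReal (rexp (-t ^ 2 / 2) / 2) := by
          rw [hvσ, ENNReal.ofReal_div_of_pos two_pos, ENNReal.ofReal_ofNat, div_eq_mul_inv]
          congr 3
          field_simp
      _ ≤ ENNReal.ofReal (1.25 * rexp (-L)) := by
          refine ENNReal.ofReal_le_ofReal ?_
          calc rexp (-t ^ 2 / 2) / 2 ≤ rexp (1 / 2) * rexp (-L) / 2 := by
                rw [← exp_add]; gcongr; linarith
            _ ≤ 1.25 * rexp (-L) := by nlinarith [exp_pos (-L)]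
  · -- the threshold may now be negative, but `1.25 e^{-L} ≥ 15 / 16` leaves room for the crude
    -- bound by the maximum of the density
    have hL4 : L ≤ 1 / 4 := by
      rw [le_div_iff₀ (by positivity)] at hneg
      nlinarith
    have hthreshold : m - σ / 2 ≤ m + σ * (x - 1 / (2 * x)) := by
      have hx35 : 3 / 5 ≤ x := by nlinarith
      have : 1 / (2 * x) ≤ x + 1 / 2 := by rw [div_le_iff₀ (by positivity)]; nlinarith
      nlinarith
    have hpi : (2:ℝ) ≤ √(2 * π) := by
      rw [le_sqrt zero_le_two (by positivity)]
      nlinarith [pi_gt_three]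
    calc gaussianReal m (σ ^ 2).toNNReal (Ioi (m + σ * (x - 1 / (2 * x))))
        ≤ gaussianReal m (σ ^ 2).toNNReal (Ioi (m - σ / 2)) :=
          measure_mono (Ioi_subset_Ioi hthreshold)
      _ ≤ ENNReal.ofReal (σ / 2 / √(2 * π * (σ ^ 2).toNNReal)) + 2⁻¹ :=
          gaussianReal_Ioi_sub_le m hv _
      _ = ENNReal.ofReal ((2 * √(2 * π))⁻¹ + 1 / 2) := by
          rw [hvσ, sqrt_mul (by positivity), sqrt_sq hσ.le,
            ENNReal.ofReal_add (by positivity) (by norm_num)]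
          congr 1
          · congr 1; field_simp
          · rw [one_div, ENNReal.ofReal_inv_of_pos two_pos, ENNReal.ofReal_ofNat]
      _ ≤ ENNReal.ofReal (1.25 * rexp (-L)) := by
          refine ENNReal.ofReal_le_ofReal ?_
          have : (2 * √(2 * π))⁻¹ ≤ 1 / 4 := by
            rw [inv_le_comm₀ (by positivity) (by norm_num)]; linarith
          nlinarith [add_one_le_exp (-L)]

lemma gaussianReal_le_exp_mul_add_of_le {a b Δ ε σ L : ℝ} (hba : b ≤ a) (hab : a - b ≤ Δ)
    (hε1 : ε ≤ 1) (hσ : 0 < σ) (hL : 1 / 5 ≤ L) (hΔ : Δ * √(2 * L) ≤ σ * ε) (S : Set ℝ) :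
    gaussianReal a (σ ^ 2).toNNReal S
      ≤ ENNReal.ofReal (rexp ε) * gaussianReal b (σ ^ 2).toNNReal S
        + ENNReal.ofReal (1.25 * rexp (-L)) := by
  set x := √(2 * L)
  have hx : 0 < x := sqrt_pos.2 (by linarith)
  have hv : (σ ^ 2).toNNReal ≠ 0 := by simpa using hσ.ne'
  have hvσ : ((σ ^ 2).toNNReal : ℝ) = σ ^ 2 := Real.coe_toNNReal _ (sq_nonneg σ)
  set G := {y : ℝ | (a - b) * (2 * y - a - b) / (2 * (σ ^ 2).toNNReal) ≤ ε}
  have hGc : Gᶜ ⊆ Ioi (a + σ * (x - 1 / (2 * x))) := by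
    intro y hy
    by_contra hle
    refine hy ?_
    simp only [G, mem_ofPred_eq, hvσ, div_le_iff₀ (by positivity : (0:ℝ) < 2 * σ ^ 2)]
    simp only [mem_Ioi, not_lt] at hle
    have hcx : (a - b) * x ≤ σ * ε := by nlinarith
    have hcσ : (a - b) * x ≤ σ := hcx.trans (by nlinarith)
    have hu : 2 * x * (y - a) ≤ 2 * σ * x ^ 2 - σ := by
      have : x * (1 / (2 * x)) = 1 / 2 := by field_simp
      nlinarith
    -- after multiplying by `x`, the term `(a - b) ^ 2 * x ≤ (a - b) * σ` absorbs the `-σ` of `hu`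
    have : x * ((a - b) * (2 * y - a - b)) ≤ x * (ε * (2 * σ ^ 2)) := by
      nlinarith [mul_le_mul_of_nonneg_left hcσ (sub_nonneg.2 hba),
        mul_le_mul_of_nonneg_left hcx (by positivity : (0:ℝ) ≤ 2 * σ * x)]
    exact le_of_mul_le_mul_left this hx
  calc gaussianReal a (σ ^ 2).toNNReal S
      ≤ gaussianReal a (σ ^ 2).toNNReal (S ∩ G) + gaussianReal a (σ ^ 2).toNNReal (S \ G) :=
        measure_le_inter_add_sdiff _ _ _
    _ ≤ ENNReal.ofReal (rexp ε) * gaussianReal b (σ ^ 2).toNNReal S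
          + ENNReal.ofReal (1.25 * rexp (-L)) := by
        gcongr ?_ + ?_
        · exact (gaussianReal_le_exp_mul_of_forall_le hv fun y hy => hy.2).trans
            (by gcongr; exact inter_subset_left)
        · exact (measure_mono ((sdiff_subset_compl S G).trans hGc)).trans
            (gaussianReal_Ioi_add_mul_sqrt_le a hσ hL)

end ProbabilityTheory

lemma one_fifth_le_log_div {β : ℝ} (hβ0 : 0 < β) (hβ1 : β < 1) : 1 / 5 ≤ log (1.25 / β) := by
  have := one_sub_inv_le_log_of_pos (x := 1.25 / β) (by positivity)
  rw [inv_div, div_eq_mul_inv] at this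
  nlinarith

theorem gaussian_mechanism_one_dim_general
    (a b Δ ε β σ : ℝ)
    (hab : |a - b| ≤ Δ)
    (hε : 0 < ε) (hε1 : ε ≤ 1) (hβ0 : 0 < β) (hβ1 : β < 1)
    (hσ : σ ≥ Δ * Real.sqrt (2 * Real.log (1.25 / β)) / ε) :
    ∀ S : Set ℝ, MeasurableSet S →
      gaussianReal a (Real.toNNReal (σ ^ 2)) S
        ≤ ENNReal.ofReal (Real.exp ε) * gaussianReal b (Real.toNNReal (σ ^ 2)) S
          + ENNReal.ofReal β := by
  intro S _
  obtain rfl | hne := eq_or_ne a b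
  · exact le_add_right (le_mul_of_one_le_left' (ENNReal.one_le_ofReal.2 (one_le_exp hε.le)))
  set L := log (1.25 / β)
  have hL : 1 / 5 ≤ L := one_fifth_le_log_div hβ0 hβ1
  have hβL : 1.25 * rexp (-L) = β := by
    rw [exp_neg, exp_log (by positivity)]
    field_simp
  have hΔ : Δ * √(2 * L) ≤ σ * ε := (div_le_iff₀ hε).1 hσ
  have hσ0 : 0 < σ := by
    refine lt_of_lt_of_le ?_ hσ
    have : 0 < Δ := (abs_pos.2 (sub_ne_zero.2 hne)).trans_le hab
    have : 0 < √(2 * L) := sqrt_pos.2 (by linarith)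
    positivity
  rw [← hβL]
  rcases le_total b a with hba | hab'
  · exact gaussianReal_le_exp_mul_add_of_le hba (le_of_abs_le hab) hε1 hσ0 hL hΔ S
  · rw [← gaussianReal_neg_apply_neg a, ← gaussianReal_neg_apply_neg b]
    refine gaussianReal_le_exp_mul_add_of_le (neg_le_neg hab') ?_ hε1 hσ0 hL hΔ (-S)
    rw [abs_sub_comm] at hab
    linarith [le_abs_self (b - a)]

theorem gaussian_mechanism_one_dim
    (a b Δ ε β σ : ℝ)
    (hΔ : 0 ≤ Δ) (hab : |a - b| ≤ Δ)
    (hε : 0 < ε) (hε1 : ε ≤ 1) (hβ0 : 0 < β) (hβ1 : β < 1)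
    (hσ : σ ≥ Δ * Real.sqrt (2 * Real.log (1.25 / β)) / ε) :
    ∀ S : Set ℝ, MeasurableSet S →
      gaussianReal a (Real.toNNReal (σ ^ 2)) S
        ≤ ENNReal.ofReal (Real.exp ε) * gaussianReal b (Real.toNNReal (σ ^ 2)) S
          + ENNReal.ofReal β :=
  gaussian_mechanism_one_dim_general a b Δ ε β σ hab hε hε1 hβ0 hβ1 hσ
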